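/- Let P be a finite set of points in the plane partitioned by colors into sets P_c, and let q be an axis-aligned rectangle. Suppose for each color c and each pair (p_i, p_j) of points of P_c with p_i strictly dominated by p_j (both coordinates smaller), we associate the rectangle R_c(i,j) with corners p_i and p_j and weight equal to the maximum chain length in P_c ∩ R_c(i,j) among chains starting at p_i and ending at p_j. Then max over colors c of LIS(P_c ∩ q) equals the maximum weight over all rectangles R_c(i,j) contained in q, provided at least one color has a point in q (a single point p ∈ P_c ∩ q corresponds to the degenerate rectangle R_c(p,p) of weight 1). -/

import Mathlib

def Inc2 (p q : ℝ × ℝ) : Prop := p.1 < q.1 ∧ p.2 < q.2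

def InRect (x1 x2 y1 y2 : ℝ) (p : ℝ × ℝ) : Prop :=
  x1 ≤ p.1 ∧ p.1 ≤ x2 ∧ y1 ≤ p.2 ∧ p.2 ≤ y2

def ChainIn (T : Set (ℝ × ℝ)) (l : List (ℝ × ℝ)) : Prop :=
  l.Chain' Inc2 ∧ ∀ p ∈ l, p ∈ T

/-!
Every chain is contained in the rectangle spanned by its first and last point, and these two
points are equal or strictly dominate one another. Hence a longest chain of colour `c` inside
`q` is a chain from `p_i` to `p_j` inside `R_c(i,j) ⊆ q`, and conversely every chain counted by
the weight of some `R_c(i,j) ⊆ q` is a chain of colour `c` inside `q`.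
-/

namespace List.IsChain

variable {α : Type*} {l : List α}

theorem mem_Icc_head_getLast [Preorder α] (hl : l.IsChain (· ≤ ·)) (hne : l ≠ []) {x : α}
    (hx : x ∈ l) : x ∈ Set.Icc (l.head hne) (l.getLast hne) :=
  ⟨(isChain_iff_pairwise.1 hl).rel_head hx, (isChain_iff_pairwise.1 hl).rel_getLast hx⟩

theorem head_eq_getLast_or_rel {R : α → α → Prop} [IsTrans α R] (hl : l.IsChain R)
    (hne : l ≠ []) : l.head hne = l.getLast hne ∨ R (l.head hne) (l.getLast hne) := by
  have h := Relation.reflTransGen_iff_eq_or_transGen.1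
    (relationReflTransGen_of_exists_isChain l hl hne)
  rwa [Relation.transGen_eq_self, eq_comm] at h

end List.IsChain

theorem Inc2.le {p q : ℝ × ℝ} (h : Inc2 p q) : p ≤ q := ⟨h.1.le, h.2.le⟩

instance : IsTrans (ℝ × ℝ) Inc2 := ⟨fun _ _ _ h₁ h₂ => ⟨h₁.1.trans h₂.1, h₁.2.trans h₂.2⟩⟩

theorem inRect_iff_mem_Icc {x1 x2 y1 y2 : ℝ} {p : ℝ × ℝ} :
    InRect x1 x2 y1 y2 p ↔ p ∈ Set.Icc x1 x2 ×ˢ Set.Icc y1 y2 := by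
  simp only [InRect, Set.mem_prod, Set.mem_Icc, and_assoc]

theorem ChainIn.mono {S T : Set (ℝ × ℝ)} {l : List (ℝ × ℝ)} (hl : ChainIn S l) (hST : S ⊆ T) :
    ChainIn T l :=
  ⟨hl.1, fun p hp => hST (hl.2 p hp)⟩

theorem ChainIn.mem_box_head_getLast {T : Set (ℝ × ℝ)} {l : List (ℝ × ℝ)} (hl : ChainIn T l)
    (hne : l ≠ []) {x : ℝ × ℝ} (hx : x ∈ l) :
    x ∈ Set.Icc (l.head hne).1 (l.getLast hne).1 ×ˢ Set.Icc (l.head hne).2 (l.getLast hne).2 := by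
  rw [← Set.Icc_prod_eq]
  exact (hl.1.imp fun _ _ => Inc2.le).mem_Icc_head_getLast hne hx

theorem box_subset_of_inRect {x1 x2 y1 y2 : ℝ} {a b : ℝ × ℝ} (ha : InRect x1 x2 y1 y2 a)
    (hb : InRect x1 x2 y1 y2 b) :
    Set.Icc a.1 b.1 ×ˢ Set.Icc a.2 b.2 ⊆ Set.Icc x1 x2 ×ˢ Set.Icc y1 y2 :=
  Set.prod_mono (Set.Icc_subset_Icc ha.1 hb.2.1) (Set.Icc_subset_Icc ha.2.2.1 hb.2.2.2)

theorem stmt17_general {ι : Type*} (P : Finset (ℝ × ℝ)) (color : (ℝ × ℝ) → ι)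
    (x1 x2 y1 y2 : ℝ)
    (w : (ℝ × ℝ) → (ℝ × ℝ) → ℕ)
    (hw : ∀ pi ∈ P, ∀ pj ∈ P, color pi = color pj →
      (pi = pj ∨ (pi.1 < pj.1 ∧ pi.2 < pj.2)) →
      IsGreatest {t | ∃ l, ChainIn {x | x ∈ P ∧ color x = color pi ∧
          x ∈ Set.Icc pi.1 pj.1 ×ˢ Set.Icc pi.2 pj.2} l ∧
        l.head? = some pi ∧ l.getLast? = some pj ∧ l.length = t} (w pi pj))
    (M M' : ℕ)
    (hM : IsGreatest {t | ∃ (c : ι) (l : List (ℝ × ℝ)),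
      ChainIn {x | x ∈ P ∧ color x = c ∧ InRect x1 x2 y1 y2 x} l ∧
      l ≠ [] ∧ l.length = t} M)
    (hM' : IsGreatest {t | ∃ pi ∈ P, ∃ pj ∈ P, color pi = color pj ∧
      (pi = pj ∨ (pi.1 < pj.1 ∧ pi.2 < pj.2)) ∧
      (Set.Icc pi.1 pj.1 ×ˢ Set.Icc pi.2 pj.2 ⊆ Set.Icc x1 x2 ×ˢ Set.Icc y1 y2) ∧
      t = w pi pj} M') :
    M = M' := by
  refine le_antisymm ?_ ?_
  · obtain ⟨c, l, hl, hne, rfl⟩ := hM.1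
    obtain ⟨haP, hac, haq⟩ := hl.2 _ (l.head_mem hne)
    obtain ⟨hbP, hbc, hbq⟩ := hl.2 _ (l.getLast_mem hne)
    have hcol := hac.trans hbc.symm
    have hab := hl.1.head_eq_getLast_or_rel hne
    have hchain : ChainIn {x | x ∈ P ∧ color x = color (l.head hne) ∧
        x ∈ Set.Icc (l.head hne).1 (l.getLast hne).1 ×ˢ
          Set.Icc (l.head hne).2 (l.getLast hne).2} l :=
      ⟨hl.1, fun x hx => ⟨(hl.2 x hx).1, (hl.2 x hx).2.1.trans hac.symm,
        hl.mem_box_head_getLast hne hx⟩⟩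
    calc l.length ≤ w (l.head hne) (l.getLast hne) :=
          (hw _ haP _ hbP hcol hab).2
            ⟨l, hchain, List.head?_eq_some_head hne, List.getLast?_eq_some_getLast hne, rfl⟩
      _ ≤ M' := hM'.2 ⟨_, haP, _, hbP, hcol, hab, box_subset_of_inRect haq hbq, rfl⟩
  · obtain ⟨a, haP, b, hbP, hcol, hab, hsub, rfl⟩ := hM'.1
    obtain ⟨l, hl, ha, -, hlen⟩ := (hw a haP b hbP hcol hab).1
    exact hlen ▸ hM.2 ⟨color a, l,
      hl.mono fun x ⟨hxP, hxc, hx⟩ => ⟨hxP, hxc, inRect_iff_mem_Icc.2 (hsub hx)⟩,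
      List.ne_nil_of_mem (List.mem_of_mem_head? ha), rfl⟩

theorem stmt17 {ι : Type*} (P : Finset (ℝ × ℝ)) (color : (ℝ × ℝ) → ι)
    (hdist : ∀ p ∈ P, ∀ r ∈ P, p ≠ r → p.1 ≠ r.1 ∧ p.2 ≠ r.2)
    (x1 x2 y1 y2 : ℝ)
    (w : (ℝ × ℝ) → (ℝ × ℝ) → ℕ)
    (hw : ∀ pi ∈ P, ∀ pj ∈ P, color pi = color pj →
      (pi = pj ∨ (pi.1 < pj.1 ∧ pi.2 < pj.2)) →
      IsGreatest {t | ∃ l, ChainIn {x | x ∈ P ∧ color x = color pi ∧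
          x ∈ Set.Icc pi.1 pj.1 ×ˢ Set.Icc pi.2 pj.2} l ∧
        l.head? = some pi ∧ l.getLast? = some pj ∧ l.length = t} (w pi pj))
    (hq : ∃ p ∈ P, InRect x1 x2 y1 y2 p)
    (M M' : ℕ)
    (hM : IsGreatest {t | ∃ (c : ι) (l : List (ℝ × ℝ)),
      ChainIn {x | x ∈ P ∧ color x = c ∧ InRect x1 x2 y1 y2 x} l ∧
      l ≠ [] ∧ l.length = t} M)
    (hM' : IsGreatest {t | ∃ pi ∈ P, ∃ pj ∈ P, color pi = color pj ∧
      (pi = pj ∨ (pi.1 < pj.1 ∧ pi.2 < pj.2)) ∧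
      (Set.Icc pi.1 pj.1 ×ˢ Set.Icc pi.2 pj.2 ⊆ Set.Icc x1 x2 ×ˢ Set.Icc y1 y2) ∧
      t = w pi pj} M') :
    M = M' :=
  stmt17_general P color x1 x2 y1 y2 w hw M M' hM hM'
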